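/- Let N ≥ 2 and let Ω = B'₁ × (0,1) ⊂ ℝᴺ where B'₁ is the unit ball of ℝ^{N-1}. Define uₙ(x) = (1-r)ⁿ (n x', x_N) where r = |x'| and x = (x', x_N). Then (with C depending only on N) ∫_Ω |Duₙ|^{N-1} dx ≤ C for all n ≥ 1, using the estimate ∫₀¹ r^k (1-r)^{m} dr ≤ k!/m^{k+1} (up to constants). -/

import Mathlib

/-!
With `r = ‖x'‖`, the derivative of `uₙ = (1 - r)ⁿ (n x', x_N)` has norm at most
`n (n r + 2) (1 - r)ⁿ⁻¹`, and `(1 - r)ⁿ⁻¹ ≤ e · exp (-n r)` turns this into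
`4 e n exp (-‖n x'‖ / 2)`.
Its `(N - 1)`-th power is `n^(N-1)` times a fixed integrable function of `n x'`, and since
`x'` ranges over `ℝ^(N-1)` the factor `n^(N-1)` is exactly absorbed by the change of variables
`y = n x'`: the integral is bounded by `(4e)^(N-1) ∫ exp (-(N - 1)/2 ‖y‖) dy` for every `n`.
-/

open MeasureTheory Set Metric Real

theorem one_sub_pow_pred_le_exp {r : ℝ} (hr0 : 0 ≤ r) (hr1 : r ≤ 1) (n : ℕ) :
    (1 - r) ^ (n - 1) ≤ exp 1 * exp (-(n * r)) := by
  have hpred : (n : ℝ) - 1 ≤ ((n - 1 : ℕ) : ℝ) := by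
    rcases n with _ | n <;> simp
  calc (1 - r) ^ (n - 1) ≤ exp (-r) ^ (n - 1) :=
        pow_le_pow_left₀ (by linarith) (by linarith [add_one_le_exp (-r)]) _
    _ = exp (-(((n - 1 : ℕ) : ℝ) * r)) := by rw [← exp_nat_mul]; ring_nf
    _ ≤ exp (1 - n * r) := exp_le_exp.2 (by nlinarith)
    _ = exp 1 * exp (-(n * r)) := by rw [← exp_add]; ring_nf

theorem add_two_mul_exp_neg_le {t : ℝ} (ht : 0 ≤ t) :
    (t + 2) * exp (-t) ≤ 4 * exp (-(t / 2)) := by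
  have hsplit : exp (-t) = exp (-(t / 2)) * exp (-(t / 2)) := by rw [← exp_add]; ring_nf
  have ht2 : t ≤ 2 * exp (t / 2) := by linarith [add_one_le_exp (t / 2)]
  have hcancel : exp (t / 2) * exp (-(t / 2)) = 1 := by rw [← exp_add]; simp
  have hle : exp (-(t / 2)) ≤ 1 := exp_le_one_iff.2 (by linarith)
  rw [hsplit]
  nlinarith [exp_pos (-(t / 2))]

theorem add_two_mul_one_sub_pow_pred_le {r : ℝ} (hr0 : 0 ≤ r) (hr1 : r ≤ 1) (n : ℕ) :
    (n * r + 2) * (1 - r) ^ (n - 1) ≤ 4 * exp 1 * exp (-(n * r / 2)) := by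
  calc (n * r + 2) * (1 - r) ^ (n - 1) ≤ (n * r + 2) * (exp 1 * exp (-(n * r))) := by
        gcongr; exact one_sub_pow_pred_le_exp hr0 hr1 n
    _ = exp 1 * ((n * r + 2) * exp (-(n * r))) := by ring
    _ ≤ exp 1 * (4 * exp (-(n * r / 2))) := by
        gcongr exp 1 * ?_; exact add_two_mul_exp_neg_le (by positivity)
    _ = 4 * exp 1 * exp (-(n * r / 2)) := by ring

section DampedStretch

variable {E F : Type*} [NormedAddCommGroup E] [InnerProductSpace ℝ E]
  [NormedAddCommGroup F] [NormedSpace ℝ F]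

def dampedStretch (n : ℕ) (y : E × F) : E × F := (1 - ‖y.1‖) ^ n • ((n : ℝ) • y.1, y.2)

theorem exists_hasFDerivAt_one_sub_norm_fst_pow {x : E × F} (hx0 : x.1 ≠ 0)
    (hx1 : ‖x.1‖ ≤ 1) (n : ℕ) :
    ∃ D : E × F →L[ℝ] ℝ, HasFDerivAt (fun y : E × F => (1 - ‖y.1‖) ^ n) D x ∧
      ‖D‖ ≤ n * (1 - ‖x.1‖) ^ (n - 1) := by
  obtain ⟨ν, hν⟩ : ∃ ν, HasFDerivAt (fun y : E × F => ‖y.1‖) ν x :=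
    ⟨_, (differentiableAt_fst.norm ℝ hx0).hasFDerivAt⟩
  have hν_le : ‖ν‖ ≤ 1 := by
    simpa using hν.le_of_lipschitz (lipschitzWith_one_norm.comp LipschitzWith.prod_fst)
  refine ⟨_, (hν.const_sub 1).pow n, ?_⟩
  have hr : 0 ≤ 1 - ‖x.1‖ := by linarith
  calc ‖(n • (1 - ‖x.1‖) ^ (n - 1)) • -ν‖ ≤ ‖n • (1 - ‖x.1‖) ^ (n - 1)‖ * ‖-ν‖ :=
        ContinuousLinearMap.opNorm_smul_le _ _
    _ ≤ n * (1 - ‖x.1‖) ^ (n - 1) := by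
        rw [norm_neg, nsmul_eq_mul, Real.norm_eq_abs, abs_of_nonneg (by positivity)]
        exact mul_le_of_le_one_right (by positivity) hν_le

theorem norm_smul_fst_prod_snd_le {c : ℝ} (hc : 1 ≤ c) :
    ‖(c • ContinuousLinearMap.fst ℝ E F).prod (ContinuousLinearMap.snd ℝ E F)‖ ≤ c := by
  rw [ContinuousLinearMap.opNorm_prod, Prod.norm_def]
  refine max_le ?_ ((ContinuousLinearMap.norm_snd_le ℝ E F).trans hc)
  calc ‖c • ContinuousLinearMap.fst ℝ E F‖ ≤ ‖c‖ * ‖ContinuousLinearMap.fst ℝ E F‖ :=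
        ContinuousLinearMap.opNorm_smul_le _ _
    _ ≤ c * 1 := by
        rw [Real.norm_of_nonneg (by linarith)]
        exact mul_le_mul_of_nonneg_left (ContinuousLinearMap.norm_fst_le ℝ E F) (by linarith)
    _ = c := mul_one c

theorem norm_fderiv_dampedStretch_le {n : ℕ} (hn : 1 ≤ n) {x : E × F} (hx0 : x.1 ≠ 0)
    (hx1 : ‖x.1‖ ≤ 1) (hx2 : ‖x.2‖ ≤ 1) :
    ‖fderiv ℝ (dampedStretch n) x‖ ≤ n * (n * ‖x.1‖ + 2) * (1 - ‖x.1‖) ^ (n - 1) := by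
  obtain ⟨D, hD, hD_le⟩ := exists_hasFDerivAt_one_sub_norm_fst_pow hx0 hx1 n
  set L : E × F →L[ℝ] E × F :=
    ((n : ℝ) • ContinuousLinearMap.fst ℝ E F).prod (ContinuousLinearMap.snd ℝ E F)
  have hL : HasFDerivAt (fun y : E × F => ((n : ℝ) • y.1, y.2)) L x :=
    (hasFDerivAt_fst.const_smul (n : ℝ)).prodMk hasFDerivAt_snd
  have hL_le : ‖L‖ ≤ n := norm_smul_fst_prod_snd_le (by exact_mod_cast hn)
  have hLx : ‖((n : ℝ) • x.1, x.2)‖ ≤ n * ‖x.1‖ + 1 := by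
    rw [Prod.norm_def, norm_smul, Real.norm_natCast]
    exact max_le (by linarith) (by nlinarith [norm_nonneg x.1, (n.cast_nonneg : (0 : ℝ) ≤ n)])
  have hr : 0 ≤ 1 - ‖x.1‖ := by linarith
  have hpow : (1 - ‖x.1‖) ^ n ≤ (1 - ‖x.1‖) ^ (n - 1) :=
    pow_le_pow_of_le_one hr (by linarith [norm_nonneg x.1]) (Nat.sub_le n 1)
  rw [(show HasFDerivAt (dampedStretch n) _ x from hD.smul hL).fderiv]
  calc ‖(1 - ‖x.1‖) ^ n • L + D.smulRight ((n : ℝ) • x.1, x.2)‖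
      ≤ (1 - ‖x.1‖) ^ n * ‖L‖ + ‖D‖ * ‖((n : ℝ) • x.1, x.2)‖ := by
        refine norm_add_le_of_le ?_ (ContinuousLinearMap.norm_smulRight_apply D _).le
        refine (ContinuousLinearMap.opNorm_smul_le _ _).trans_eq ?_
        rw [Real.norm_eq_abs, abs_of_nonneg (by positivity)]
    _ ≤ (1 - ‖x.1‖) ^ (n - 1) * n + n * (1 - ‖x.1‖) ^ (n - 1) * (n * ‖x.1‖ + 1) := by
        gcongr
    _ = n * (n * ‖x.1‖ + 2) * (1 - ‖x.1‖) ^ (n - 1) := by ring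

theorem norm_fderiv_dampedStretch_pow_le {n : ℕ} (hn : 1 ≤ n) {x : E × F} (hx0 : x.1 ≠ 0)
    (hx1 : ‖x.1‖ ≤ 1) (hx2 : ‖x.2‖ ≤ 1) (d : ℕ) :
    ‖fderiv ℝ (dampedStretch n) x‖ ^ d ≤
      (4 * exp 1) ^ d * (n ^ d * exp (-(d / 2 * ‖(n : ℝ) • x.1‖))) := by
  have hbound :
      ‖fderiv ℝ (dampedStretch n) x‖ ≤ 4 * exp 1 * n * exp (-(‖(n : ℝ) • x.1‖ / 2)) :=
    calc ‖fderiv ℝ (dampedStretch n) x‖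
        ≤ n * ((n * ‖x.1‖ + 2) * (1 - ‖x.1‖) ^ (n - 1)) := by
          simpa only [mul_assoc] using norm_fderiv_dampedStretch_le hn hx0 hx1 hx2
      _ ≤ n * (4 * exp 1 * exp (-(n * ‖x.1‖ / 2))) := by
          gcongr n * ?_; exact add_two_mul_one_sub_pow_pred_le (norm_nonneg _) hx1 n
      _ = 4 * exp 1 * n * exp (-(‖(n : ℝ) • x.1‖ / 2)) := by
          rw [norm_smul, Real.norm_natCast]; ring
  calc ‖fderiv ℝ (dampedStretch n) x‖ ^ d
      ≤ (4 * exp 1 * n * exp (-(‖(n : ℝ) • x.1‖ / 2))) ^ d :=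
        pow_le_pow_left₀ (norm_nonneg (fderiv ℝ (dampedStretch n) x)) hbound d
    _ = (4 * exp 1) ^ d * (n ^ d * exp (-(d / 2 * ‖(n : ℝ) • x.1‖))) := by
        rw [mul_pow, mul_pow, ← exp_nat_mul, mul_assoc]; ring_nf

theorem ae_norm_fderiv_dampedStretch_pow_le [MeasurableSpace E] [OpensMeasurableSpace E]
    (μ : Measure E)
    [NullSingletonClass μ] [SFinite μ] {n : ℕ} (hn : 1 ≤ n) (d : ℕ) :
    ∀ᵐ x ∂(μ.prod volume).restrict (ball 0 1 ×ˢ Ioo (0 : ℝ) 1),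
      ‖fderiv ℝ (dampedStretch n) x‖ ^ d ≤
        (4 * exp 1) ^ d * (n ^ d * exp (-(d / 2 * ‖(n : ℝ) • x.1‖))) := by
  filter_upwards [ae_restrict_mem (measurableSet_ball.prod measurableSet_Ioo),
    ae_restrict_of_ae (Measure.quasiMeasurePreserving_fst.ae (Measure.ae_ne μ 0))]
    with x ⟨hx1, hx2⟩ hx0
  rw [mem_ball_zero_iff] at hx1
  exact norm_fderiv_dampedStretch_pow_le hn hx0 hx1.le
    (abs_le.2 ⟨by linarith [hx2.1], hx2.2.le⟩) d

end DampedStretch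

section Integrals

variable {V : Type*} [NormedAddCommGroup V] [NormedSpace ℝ V] [FiniteDimensional ℝ V]
  [MeasurableSpace V] [BorelSpace V] (μ : Measure V) [μ.IsAddHaarMeasure]

theorem integrable_exp_neg_mul_norm [Nontrivial V] {b : ℝ} (hb : 0 < b) :
    Integrable (fun x : V => exp (-(b * ‖x‖))) μ := by
  refine (integrable_fun_norm_addHaar μ (f := fun t => exp (-(b * t)))).2 ?_
  have h := integrableOn_rpow_mul_exp_neg_mul_rpow (s := ((Module.finrank ℝ V - 1 : ℕ) : ℝ))
    (neg_one_lt_zero.trans_le (Nat.cast_nonneg _)) one_pos hb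
  refine h.congr_fun (fun y _ => ?_) measurableSet_Ioi
  simp [rpow_natCast, rpow_one]

theorem integral_pow_finrank_mul_comp_smul (g : V → ℝ) {R : ℝ} (hR : 0 < R) :
    ∫ x, R ^ Module.finrank ℝ V * g (R • x) ∂μ = ∫ x, g x ∂μ := by
  rw [integral_const_mul, Measure.integral_comp_smul, abs_of_pos (by positivity), smul_eq_mul,
    mul_inv_cancel_left₀ (by positivity)]

end Integrals

section ProdIoo

variable {α : Type*} [MeasurableSpace α] (μ : Measure α) [SFinite μ] {f : α → ℝ}

theorem setIntegral_prod_Ioo_zero_one (s : Set α) :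
    ∫ z in s ×ˢ Ioo (0 : ℝ) 1, f z.1 ∂μ.prod volume = ∫ x in s, f x ∂μ := by
  simpa using setIntegral_prod_mul (μ := μ) (ν := volume) f (fun _ => (1 : ℝ)) s
    (Ioo (0 : ℝ) 1)

theorem MeasureTheory.Integrable.integrableOn_prod_Ioo_zero_one (hf : Integrable f μ)
    (s : Set α) :
    IntegrableOn (fun z : α × ℝ => f z.1) (s ×ˢ Ioo (0 : ℝ) 1) (μ.prod volume) := by
  rw [IntegrableOn, ← Measure.prod_restrict]
  exact (hf.integrableOn (s := s)).comp_fst (ν := volume.restrict (Ioo (0 : ℝ) 1))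

theorem setIntegral_prod_Ioo_zero_one_le (hf : Integrable f μ) (hf0 : 0 ≤ f) (s : Set α) :
    ∫ z in s ×ˢ Ioo (0 : ℝ) 1, f z.1 ∂μ.prod volume ≤ ∫ x, f x ∂μ := by
  rw [setIntegral_prod_Ioo_zero_one]
  exact setIntegral_le_integral hf (.of_forall hf0)

end ProdIoo

/-- Example 3.9, uniform `W^{1,N-1}` bound: for
`uₙ(x',x_N) = (1-|x'|)ⁿ (n x', x_N)` on `Ω = B'₁ × (0,1)`, one has
`∫_Ω |Duₙ|^{N-1} dx ≤ C` for all `n ≥ 1`, with `C` depending only on `N`. -/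
theorem stmt18 (N : ℕ) (hN : 2 ≤ N)
    (Ω : Set (EuclideanSpace ℝ (Fin (N - 1)) × ℝ))
    (hΩ : Ω = {x : EuclideanSpace ℝ (Fin (N - 1)) × ℝ | ‖x.1‖ < 1 ∧ x.2 ∈ Ioo (0:ℝ) 1})
    (u : ℕ → EuclideanSpace ℝ (Fin (N - 1)) × ℝ → EuclideanSpace ℝ (Fin (N - 1)) × ℝ)
    (hu : ∀ n x, u n x =
      ((1 - ‖x.1‖) ^ n • ((n : ℝ) • x.1), (1 - ‖x.1‖) ^ n * x.2)) :
    ∃ C : ℝ, 0 < C ∧ ∀ n : ℕ, 1 ≤ n →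
      ∫ x in Ω, ‖fderiv ℝ (u n) x‖ ^ (N - 1) ≤ C := by
  have : Nonempty (Fin (N - 1)) := ⟨⟨0, by omega⟩⟩
  set g : EuclideanSpace ℝ (Fin (N - 1)) → ℝ := fun y => exp (-((N - 1 : ℕ) / 2 * ‖y‖))
  have hg : Integrable g := integrable_exp_neg_mul_norm volume (by norm_num; omega)
  refine ⟨(4 * exp 1) ^ (N - 1) * ∫ y, g y, mul_pos (by positivity) (integral_exp_pos hg),
    fun n hn => ?_⟩
  have hn0 : (0 : ℝ) < n := by exact_mod_cast hn
  set G : EuclideanSpace ℝ (Fin (N - 1)) → ℝ :=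
    fun y => (4 * exp 1) ^ (N - 1) * (n ^ (N - 1) * g ((n : ℝ) • y))
  have hG : Integrable G := ((hg.comp_smul hn0.ne').const_mul _).const_mul _
  have hΩ_prod : Ω = ball 0 1 ×ˢ Ioo 0 1 := by rw [hΩ]; ext x; simp
  have hbound := ae_norm_fderiv_dampedStretch_pow_le (E := EuclideanSpace ℝ (Fin (N - 1)))
    volume hn (N - 1)
  rw [← show u n = dampedStretch n from funext (hu n)] at hbound
  rw [hΩ_prod, Measure.volume_eq_prod]
  calc ∫ x in ball 0 1 ×ˢ Ioo 0 1, ‖fderiv ℝ (u n) x‖ ^ (N - 1) ∂volume.prod volume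
      ≤ ∫ x in ball 0 1 ×ˢ Ioo 0 1, G x.1 ∂volume.prod volume :=
        integral_mono_of_nonneg (.of_forall fun _ => by positivity)
          (hG.integrableOn_prod_Ioo_zero_one _ _) hbound
    _ ≤ ∫ y, G y := setIntegral_prod_Ioo_zero_one_le _ hG (fun y => by positivity) _
    _ = (4 * exp 1) ^ (N - 1) * ∫ y, g y := by
        rw [← integral_pow_finrank_mul_comp_smul volume g hn0, finrank_euclideanSpace_fin,
          ← integral_const_mul]
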